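/- Let f : [0,1] → [0,1] be a strictly increasing singular function from [0,1] onto [0,1]. Then the graph of the function x ↦ 1 − f(x) is an antichain in [0,1]^2 (with respect to the coordinatewise partial order) whose 1-dimensional Hausdorff measure equals 2. -/

import Mathlib

open MeasureTheory

/-- The normalizing constant `α_s = π^(s/2) / (2^s Γ(s/2 + 1))`. Note `α_1 = 1`. -/
noncomputable def hausdorffNormalizingConstant (s : ℝ) : ENNReal :=
  ENNReal.ofReal (Real.pi ^ (s / 2) / (2 ^ s * Real.Gamma (s / 2 + 1)))

/-- The `s`-dimensional Hausdorff measure on `ℝ^n` (with the Euclidean metric), normalized by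
`α_s`. -/
noncomputable def normalizedHausdorffMeasure (n : ℕ) (s : ℝ) :
    Measure (EuclideanSpace ℝ (Fin n)) :=
  hausdorffNormalizingConstant s • Measure.hausdorffMeasure s

/-!
The graph of the antitone function `g = 1 - f` is an antichain, and on it the Euclidean distance
is dominated by the change of `p₀ - p₁`, because the two coordinates move in opposite directions.
Hence `p ↦ p₀ - p₁` has a `1`-Lipschitz inverse on the graph with values in an interval of length
`2`, giving `H¹ ≤ 2`. Conversely, `f` maps the full-measure set `S` where `f' = 0` to a null set.
Splitting the graph according to whether the height lies in (a measurable null hull of) `g(S)`,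
the horizontal projection of the first part covers `S` and the vertical projection of the second
part covers `[0,1]` up to a null set; both projections are `1`-Lipschitz, so `H¹ ≥ 1 + 1`.
-/

open Set
open scoped NNReal ENNReal

lemma hausdorffNormalizingConstant_one : hausdorffNormalizingConstant 1 = 1 := by
  have hGamma : Real.Gamma ((1 : ℝ) / 2 + 1) = 1 / 2 * Real.Gamma (1 / 2) :=
    Real.Gamma_add_one (by norm_num)
  have hsqrt : Real.sqrt Real.pi ≠ 0 := (Real.sqrt_pos.2 Real.pi_pos).ne'
  rw [hausdorffNormalizingConstant, hGamma, Real.Gamma_one_half_eq, Real.rpow_one,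
    ← Real.sqrt_eq_rpow, show (2 : ℝ) * (1 / 2 * Real.sqrt Real.pi) = Real.sqrt Real.pi by ring,
    div_self hsqrt, ENNReal.ofReal_one]

lemma volume_image_eq_zero_of_hasDerivAt_zero {g : ℝ → ℝ} {S : Set ℝ}
    (hg : ∀ x ∈ S, HasDerivAt g 0 x) : volume (g '' S) = 0 :=
  addHaar_image_eq_zero_of_det_fderivWithin_eq_zero volume (f' := fun _ => 0)
    (fun x hx => by simpa using (hg x hx).hasFDerivAt.hasFDerivWithinAt) (fun _ _ => by simp)

section HausdorffMeasure

variable {X : Type*} [MetricSpace X] [MeasurableSpace X] [BorelSpace X]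

lemma LipschitzWith.volume_image_le_hausdorffMeasure {π : X → ℝ} (hπ : LipschitzWith 1 π)
    (s : Set X) : volume (π '' s) ≤ μH[1] s := by
  simpa [← hausdorffMeasure_real] using hπ.hausdorffMeasure_image_le zero_le_one s

lemma hausdorffMeasure_le_volume_image_of_dist_le {Φ : X → ℝ} {s : Set X}
    (hΦ : ∀ p ∈ s, ∀ q ∈ s, dist p q ≤ dist (Φ p) (Φ q)) : μH[1] s ≤ volume (Φ '' s) := by
  rcases s.eq_empty_or_nonempty with rfl | ⟨p₀, -⟩
  · simp
  have : Nonempty X := ⟨p₀⟩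
  set ψ := Function.invFunOn Φ s
  have hψ : ∀ p ∈ s, ψ (Φ p) ∈ s ∧ Φ (ψ (Φ p)) = Φ p := fun p hp =>
    ⟨Function.invFunOn_mem ⟨p, hp, rfl⟩, Function.invFunOn_eq ⟨p, hp, rfl⟩⟩
  have hψ_lip : LipschitzOnWith 1 ψ (Φ '' s) := by
    refine LipschitzOnWith.of_dist_le_mul ?_
    rintro _ ⟨p, hp, rfl⟩ _ ⟨q, hq, rfl⟩
    obtain ⟨hp', hΦp⟩ := hψ p hp
    obtain ⟨hq', hΦq⟩ := hψ q hq
    simpa [hΦp, hΦq] using hΦ _ hp' _ hq'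
  have hs : s ⊆ ψ '' (Φ '' s) := fun p hp => by
    obtain ⟨hp', hΦp⟩ := hψ p hp
    refine ⟨Φ p, mem_image_of_mem Φ hp, ?_⟩
    simpa [hΦp] using hΦ _ hp' _ hp
  calc μH[1] s ≤ μH[1] (ψ '' (Φ '' s)) := measure_mono hs
    _ ≤ μH[1] (Φ '' s) := by simpa using hψ_lip.hausdorffMeasure_image_le zero_le_one
    _ = volume (Φ '' s) := by rw [hausdorffMeasure_real]

end HausdorffMeasure

lemma EuclideanSpace.lipschitzWith_apply {ι : Type*} [Fintype ι] (i : ι) :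
    LipschitzWith 1 fun p : EuclideanSpace ℝ ι => p i :=
  LipschitzWith.of_edist_le fun p q => PiLp.edist_apply_le p q i

def planeGraph (g : ℝ → ℝ) (I : Set ℝ) : Set (EuclideanSpace ℝ (Fin 2)) :=
  {p | p 0 ∈ I ∧ p 1 = g (p 0)}

section Graph

variable {g : ℝ → ℝ} {I : Set ℝ}

lemma mk_mem_planeGraph {x : ℝ} (hx : x ∈ I) : !₂[x, g x] ∈ planeGraph g I := by
  simpa [planeGraph] using hx

lemma planeGraph_subset_of_mapsTo {J : Set ℝ} (hg : MapsTo g I J) :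
    planeGraph g I ⊆ {p | p 0 ∈ I ∧ p 1 ∈ J} :=
  fun _ ⟨hp₀, hp₁⟩ => ⟨hp₀, hp₁ ▸ hg hp₀⟩

lemma eq_of_le_of_mem_planeGraph (hg : StrictAntiOn g I) {p q : EuclideanSpace ℝ (Fin 2)}
    (hp : p ∈ planeGraph g I) (hq : q ∈ planeGraph g I) (hpq : ∀ i, p i ≤ q i) : p = q := by
  obtain ⟨hp₀, hp₁⟩ := hp
  obtain ⟨hq₀, hq₁⟩ := hq
  have h₁ : p 1 = q 1 :=
    le_antisymm (hpq 1) (hp₁ ▸ hq₁ ▸ hg.antitoneOn hp₀ hq₀ (hpq 0))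
  have h₀ : p 0 = q 0 := hg.injOn hp₀ hq₀ (hp₁ ▸ hq₁ ▸ h₁)
  ext i
  fin_cases i
  exacts [h₀, h₁]

lemma dist_le_of_mem_planeGraph (hg : AntitoneOn g I) {p q : EuclideanSpace ℝ (Fin 2)}
    (hp : p ∈ planeGraph g I) (hq : q ∈ planeGraph g I) :
    dist p q ≤ dist (p 0 - p 1) (q 0 - q 1) := by
  obtain ⟨hp₀, hp₁⟩ := hp
  obtain ⟨hq₀, hq₁⟩ := hq
  have hopposite : (p 0 - q 0) * (p 1 - q 1) ≤ 0 := by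
    rcases le_total (p 0) (q 0) with h | h
    · have := hg hp₀ hq₀ h
      exact mul_nonpos_of_nonpos_of_nonneg (by linarith) (by linarith)
    · have := hg hq₀ hp₀ h
      exact mul_nonpos_of_nonneg_of_nonpos (by linarith) (by linarith)
  rw [EuclideanSpace.dist_eq, Fin.sum_univ_two, Real.dist_eq, Real.dist_eq, Real.dist_eq,
    sq_abs, sq_abs, ← Real.sqrt_sq_eq_abs]
  exact Real.sqrt_le_sqrt (by nlinarith)

lemma hausdorffMeasure_planeGraph_le (hg : AntitoneOn g I) {a b c d : ℝ} (hI : I ⊆ Icc a b)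
    (hgI : MapsTo g I (Icc c d)) : μH[1] (planeGraph g I) ≤ ENNReal.ofReal (b - a + (d - c)) := by
  have himage : (fun p : EuclideanSpace ℝ (Fin 2) => p 0 - p 1) '' planeGraph g I ⊆
      Icc (a - d) (b - c) := by
    rintro _ ⟨p, hp, rfl⟩
    obtain ⟨hp₀, hp₁⟩ := planeGraph_subset_of_mapsTo hgI hp
    obtain ⟨hp₀a, hp₀b⟩ := hI hp₀
    exact ⟨by linarith [hp₁.2], by linarith [hp₁.1]⟩
  calc μH[1] (planeGraph g I)
      ≤ volume ((fun p : EuclideanSpace ℝ (Fin 2) => p 0 - p 1) '' planeGraph g I) :=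
        hausdorffMeasure_le_volume_image_of_dist_le fun p hp q hq =>
          dist_le_of_mem_planeGraph hg hp hq
    _ ≤ volume (Icc (a - d) (b - c)) := measure_mono himage
    _ = ENNReal.ofReal (b - a + (d - c)) := by rw [Real.volume_Icc]; ring_nf

/-- A set on which `g` is singular contributes its full length horizontally, while the rest of
the graph still contributes the full length of `g '' I` vertically. -/
lemma volume_add_volume_image_le_hausdorffMeasure_planeGraph {S : Set ℝ} (hSI : S ⊆ I)
    (hgS : volume (g '' S) = 0) : volume S + volume (g '' I) ≤ μH[1] (planeGraph g I) := by
  set U := toMeasurable volume (g '' S)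
  set B : Set (EuclideanSpace ℝ (Fin 2)) := (fun p => p 1) ⁻¹' U
  have hB : MeasurableSet B :=
    (EuclideanSpace.lipschitzWith_apply 1).continuous.measurable (measurableSet_toMeasurable _ _)
  have hS : S ⊆ (fun p : EuclideanSpace ℝ (Fin 2) => p 0) '' (planeGraph g I ∩ B) := fun x hx =>
    ⟨!₂[x, g x], ⟨mk_mem_planeGraph (hSI hx), subset_toMeasurable _ _ ⟨x, hx, rfl⟩⟩, rfl⟩
  have hgI : g '' I \ U ⊆ (fun p : EuclideanSpace ℝ (Fin 2) => p 1) '' (planeGraph g I \ B) := by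
    rintro _ ⟨⟨x, hx, rfl⟩, hxU⟩
    exact ⟨!₂[x, g x], ⟨mk_mem_planeGraph hx, hxU⟩, rfl⟩
  calc volume S + volume (g '' I) = volume S + volume (g '' I \ U) := by
        rw [measure_sdiff_null (by rwa [measure_toMeasurable])]
    _ ≤ μH[1] (planeGraph g I ∩ B) + μH[1] (planeGraph g I \ B) := by
        gcongr
        · exact (measure_mono hS).trans
            ((EuclideanSpace.lipschitzWith_apply 0).volume_image_le_hausdorffMeasure _)
        · exact (measure_mono hgI).trans
            ((EuclideanSpace.lipschitzWith_apply 1).volume_image_le_hausdorffMeasure _)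
    _ = μH[1] (planeGraph g I) := measure_inter_add_sdiff _ hB

end Graph

theorem statement6_general (f : ℝ → ℝ) (S : Set ℝ)
    (hmono : StrictMonoOn f (Set.Icc 0 1))
    (hmaps : Set.MapsTo f (Set.Icc 0 1) (Set.Icc 0 1))
    (hsurj : Set.SurjOn f (Set.Icc 0 1) (Set.Icc 0 1))
    (hS : S ⊆ Set.Ioo 0 1) (hSvol : volume S = 1)
    (hderiv : ∀ x ∈ S, HasDerivAt f 0 x)
    (A : Set (EuclideanSpace ℝ (Fin 2)))
    (hA : A = {p : EuclideanSpace ℝ (Fin 2) | p 0 ∈ Set.Icc (0 : ℝ) 1 ∧ p 1 = 1 - f (p 0)}) :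
    A ⊆ {p : EuclideanSpace ℝ (Fin 2) | ∀ i, p i ∈ Set.Icc (0 : ℝ) 1} ∧
    (∀ x ∈ A, ∀ y ∈ A, (∀ i, x i ≤ y i) → x = y) ∧
    normalizedHausdorffMeasure 2 1 A = 2 := by
  set g := fun x => 1 - f x
  change A = planeGraph g (Icc 0 1) at hA
  subst hA
  have hanti : StrictAntiOn g (Icc 0 1) := fun x hx y hy hxy => by
    simp only [g]; linarith [hmono hx hy hxy]
  have hgmaps : MapsTo g (Icc 0 1) (Icc 0 1) := fun x hx => by
    obtain ⟨h₀, h₁⟩ := hmaps hx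
    exact ⟨by linarith, by linarith⟩
  have hgsurj : Icc 0 1 ⊆ g '' Icc 0 1 := fun y ⟨h₀, h₁⟩ => by
    obtain ⟨x, hx, hfx⟩ := hsurj (show 1 - y ∈ Icc (0 : ℝ) 1 from ⟨by linarith, by linarith⟩)
    exact ⟨x, hx, by simp only [g, hfx]; ring⟩
  have hgS : volume (g '' S) = 0 := volume_image_eq_zero_of_hasDerivAt_zero fun x hx => by
    simpa using (hderiv x hx).const_sub 1
  refine ⟨fun p hp => ?_, fun p hp q hq => eq_of_le_of_mem_planeGraph hanti hp hq, ?_⟩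
  · obtain ⟨hp₀, hp₁⟩ := planeGraph_subset_of_mapsTo hgmaps hp
    intro i; fin_cases i <;> assumption
  rw [normalizedHausdorffMeasure, hausdorffNormalizingConstant_one, one_smul]
  refine le_antisymm ?_ ?_
  · simpa [one_add_one_eq_two] using
      hausdorffMeasure_planeGraph_le hanti.antitoneOn subset_rfl hgmaps
  · calc (2 : ℝ≥0∞) = volume S + volume (Icc (0 : ℝ) 1) := by simp [hSvol, one_add_one_eq_two]
      _ ≤ volume S + volume (g '' Icc 0 1) := by gcongr
      _ ≤ _ := volume_add_volume_image_le_hausdorffMeasure_planeGraph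
          (hS.trans Ioo_subset_Icc_self) hgS

/-- If `f` is a strictly increasing singular function from `[0,1]` onto `[0,1]`,
then the graph of `x ↦ 1 - f x` is an antichain in `[0,1]^2` (coordinatewise order) whose
`1`-dimensional Hausdorff measure equals `2`. -/
theorem statement6 (f : ℝ → ℝ) (S : Set ℝ)
    (hmono : StrictMonoOn f (Set.Icc 0 1))
    (hcont : ContinuousOn f (Set.Icc 0 1))
    (hmaps : Set.MapsTo f (Set.Icc 0 1) (Set.Icc 0 1))
    (hsurj : Set.SurjOn f (Set.Icc 0 1) (Set.Icc 0 1))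
    (hS : S ⊆ Set.Ioo 0 1) (hSvol : volume S = 1)
    (hderiv : ∀ x ∈ S, HasDerivAt f 0 x)
    (A : Set (EuclideanSpace ℝ (Fin 2)))
    (hA : A = {p : EuclideanSpace ℝ (Fin 2) | p 0 ∈ Set.Icc (0 : ℝ) 1 ∧ p 1 = 1 - f (p 0)}) :
    A ⊆ {p : EuclideanSpace ℝ (Fin 2) | ∀ i, p i ∈ Set.Icc (0 : ℝ) 1} ∧
    (∀ x ∈ A, ∀ y ∈ A, (∀ i, x i ≤ y i) → x = y) ∧
    normalizedHausdorffMeasure 2 1 A = 2 :=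
  statement6_general f S hmono hmaps hsurj hS hSvol hderiv A hA
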